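/- arXiv:2505.20946 — 10 statements merged into one kernel-verified Lean document; each statement's English description precedes it below -/
import Mathlib

section
/- Suppose (λ_j − d)(λ_j + d + 2k) > 0 for all j = 1,…,p, that k + d ≠ 0, and that α_j ≠ 0 for at least one j. Then SB_LTE − SB_AULTE > 0; that is, the squared bias of the almost unbiased Liu-type estimator is strictly smaller than the squared bias of the Liu-type estimator. -/
open Finset

/-! With `r_j = (k + d) / (λ_j + k)` the `j`-th terms of `SB_LTE` and `SB_AULTE` are `α_j² r_j²` and
`α_j² r_j⁴`, so the difference is `∑ α_j² r_j² (1 - r_j²)`. Since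
`(λ_j - d)(λ_j + d + 2k) = (λ_j + k)² - (k + d)²`, the hypothesis says exactly `r_j² < 1`, and
`k + d ≠ 0` gives `r_j ≠ 0`; so every term is nonnegative and the one with `α_j ≠ 0` is positive. -/

theorem sq_sub_pow_four_pos {R : Type*} [Ring R] [LinearOrder R] [IsStrictOrderedRing R] {r : R}
    (h0 : r ≠ 0) (h1 : r ^ 2 < 1) : 0 < r ^ 2 - r ^ 4 := by
  have : r ^ 2 - r ^ 4 = r ^ 2 * (1 - r ^ 2) := by rw [mul_sub, mul_one, ← pow_add]
  rw [this]
  exact mul_pos (by positivity) (sub_pos.2 h1)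

theorem div_sq_sub_div_pow_four_pos {K : Type*} [Field K] [LinearOrder K] [IsStrictOrderedRing K]
    {a b : K} (ha : a ≠ 0) (hab : a ^ 2 < b ^ 2) : 0 < (a / b) ^ 2 - (a / b) ^ 4 := by
  have hb : 0 < b ^ 2 := (sq_nonneg a).trans_lt hab
  refine sq_sub_pow_four_pos (div_ne_zero ha fun h0 => ?_) ?_
  · simp [h0] at hb
  · rwa [div_pow, div_lt_one hb]

theorem sb_LTE_sub_sb_AULTE_pos_general (p : ℕ)
    (lam α : Fin p → ℝ) (k d : ℝ)
    (h : ∀ j, (lam j - d) * (lam j + d + 2 * k) > 0)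
    (hkd : k + d ≠ 0) (hα : ∃ j, α j ≠ 0) :
    (∑ j, (k + d) ^ 2 * (α j) ^ 2 / (lam j + k) ^ 2) -
      (∑ j, (k + d) ^ 4 * (α j) ^ 2 / (lam j + k) ^ 4) > 0 := by
  set r : Fin p → ℝ := fun j => (k + d) / (lam j + k)
  have hr : ∀ j, 0 < r j ^ 2 - r j ^ 4 := fun j =>
    div_sq_sub_div_pow_four_pos hkd (by linear_combination h j)
  have hterm : ∀ j, (k + d) ^ 2 * α j ^ 2 / (lam j + k) ^ 2 - (k + d) ^ 4 * α j ^ 2 / (lam j + k) ^ 4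
      = α j ^ 2 * (r j ^ 2 - r j ^ 4) := fun j => by simp only [r, div_pow]; ring
  rw [← sum_sub_distrib, gt_iff_lt]
  simp_rw [hterm]
  obtain ⟨j₀, hj₀⟩ := hα
  exact sum_pos' (fun j _ => mul_nonneg (sq_nonneg _) (hr j).le)
    ⟨j₀, mem_univ _, mul_pos (by positivity) (hr j₀)⟩

/-- If `(λ_j − d)(λ_j + d + 2k) > 0` for all `j`, `k + d ≠ 0`, and some `α_j ≠ 0`,
then the squared bias of AULTE is strictly smaller than that of LTE. -/
theorem sb_LTE_sub_sb_AULTE_pos (p : ℕ) (hp : 1 ≤ p)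
    (lam α : Fin p → ℝ) (hlam : ∀ j, 0 < lam j) (k d : ℝ) (hk : 0 < k)
    (h : ∀ j, (lam j - d) * (lam j + d + 2 * k) > 0)
    (hkd : k + d ≠ 0) (hα : ∃ j, α j ≠ 0) :
    (∑ j, (k + d) ^ 2 * (α j) ^ 2 / (lam j + k) ^ 2) -
      (∑ j, (k + d) ^ 4 * (α j) ^ 2 / (lam j + k) ^ 4) > 0 :=
  sb_LTE_sub_sb_AULTE_pos_general p lam α k d h hkd hα
end

section
/- Suppose that for every j = 1,…,p one has d > λ_j and (k+d)(d − λ_j) < 2(λ_j+k)², and that α_j ≠ 0 for at least one j. Then SB_LTE − SB_MAULTE > 0; that is, the squared bias of the modified almost unbiased Liu-type estimator is strictly smaller than the squared bias of the Liu-type estimator. -/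
/-!
Term by term, the MAULTE bias is the LTE bias times the factor `((L² + s) / L²)²`, where
`L = λ_j + k` and `s = (k + d)(λ_j − d)`. The hypotheses say exactly that `-2L² < s < 0`, so
`|L² + s| < L²` and the factor lies in `[0, 1)`; the strict inequality comes from a coordinate
with `α_j ≠ 0`.
-/

open Finset

lemma sq_add_div_sq_lt_one {a s : ℝ} (ha : 0 < a) (hs : s < 0) (hs' : -(2 * a) < s) :
    (a + s) ^ 2 / a ^ 2 < 1 :=
  (div_lt_one (by positivity)).mpr (sq_lt_sq' (by linarith) (by linarith))

lemma mul_sq_add_div_pow_six {L s c : ℝ} (hL : L ≠ 0) :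
    c * (L ^ 2 + s) ^ 2 / L ^ 6 = c / L ^ 2 * ((L ^ 2 + s) ^ 2 / (L ^ 2) ^ 2) := by
  field_simp

lemma maulte_bias_factor_lt_one {lam k d : ℝ} (hlam : 0 < lam) (hk : 0 < k) (hd : lam < d)
    (hbd : (k + d) * (d - lam) < 2 * (lam + k) ^ 2) :
    ((lam + k) ^ 2 + (k + d) * (lam - d)) ^ 2 / ((lam + k) ^ 2) ^ 2 < 1 := by
  have hkd : 0 < k + d := by linarith
  refine sq_add_div_sq_lt_one (by positivity) (mul_neg_of_pos_of_neg hkd (by linarith)) ?_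
  have hswap : (k + d) * (lam - d) = -((k + d) * (d - lam)) := by ring
  linarith

theorem sb_LTE_sub_sb_MAULTE_pos_general (p : ℕ)
    (lam α : Fin p → ℝ) (hlam : ∀ j, 0 < lam j) (k d : ℝ) (hk : 0 < k)
    (hd : ∀ j, d > lam j) (hbd : ∀ j, (k + d) * (d - lam j) < 2 * (lam j + k) ^ 2)
    (hα : ∃ j, α j ≠ 0) :
    (∑ j, (k + d) ^ 2 * (α j) ^ 2 / (lam j + k) ^ 2) -
      (∑ j, (k + d) ^ 2 * (α j) ^ 2 *
        ((lam j + k) ^ 2 + (k + d) * (lam j - d)) ^ 2 / (lam j + k) ^ 6) > 0 := by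
  have hL : ∀ j, lam j + k ≠ 0 := fun j => (add_pos (hlam j) hk).ne'
  have hfactor := fun j => maulte_bias_factor_lt_one (hlam j) hk (hd j) (hbd j)
  obtain ⟨j₀, hj₀⟩ := hα
  rw [gt_iff_lt, sub_pos]
  simp only [mul_sq_add_div_pow_six (hL _)]
  refine sum_lt_sum (fun j _ => mul_le_of_le_one_right (by positivity) (hfactor j).le)
    ⟨j₀, mem_univ _, mul_lt_of_lt_one_right ?_ (hfactor j₀)⟩
  have hkd : k + d ≠ 0 := by linarith [hlam j₀, hd j₀]
  have := hL j₀
  positivity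

/-- If `d > λ_j` and `(k+d)(d − λ_j) < 2(λ_j+k)²` for all `j`, and some `α_j ≠ 0`,
then the squared bias of MAULTE is strictly smaller than that of LTE. -/
theorem sb_LTE_sub_sb_MAULTE_pos (p : ℕ) (hp : 1 ≤ p)
    (lam α : Fin p → ℝ) (hlam : ∀ j, 0 < lam j) (k d : ℝ) (hk : 0 < k)
    (hd : ∀ j, d > lam j) (hbd : ∀ j, (k + d) * (d - lam j) < 2 * (lam j + k) ^ 2)
    (hα : ∃ j, α j ≠ 0) :
    (∑ j, (k + d) ^ 2 * (α j) ^ 2 / (lam j + k) ^ 2) -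
      (∑ j, (k + d) ^ 2 * (α j) ^ 2 *
        ((lam j + k) ^ 2 + (k + d) * (lam j - d)) ^ 2 / (lam j + k) ^ 6) > 0 :=
  sb_LTE_sub_sb_MAULTE_pos_general p lam α hlam k d hk hd hbd hα
end

section
/- Suppose that for every j = 1,…,p one has −λ_j − 2k < d < λ_j − √2·(λ_j + k), and that α_j ≠ 0 for at least one j. Then SB_AULTE − SB_MAULTE > 0; that is, the squared bias of the modified almost unbiased Liu-type estimator is strictly smaller than the squared bias of the almost unbiased Liu-type estimator. -/
/-!
Write `s = λ_j + k` and `t = k + d`, so that `λ_j - d = s - t`. The `j`-th term of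
`SB_AULTE - SB_MAULTE` is then `(t α_j / s³)² ((t s)² - (s² + t (s - t))²)`, and
`(t s)² - (s² + t (s - t))² = (s² - t²) ((s - t)² - 2 s²)`. The hypotheses on `d` say exactly
`-s < t < (1 - √2) s`, which forces `s > 0 > t` and makes both factors positive.
-/

open Finset Real

section

variable {s t : ℝ}

lemma pos_and_neg_of_neg_lt_of_lt_one_sub_sqrt_two_mul (hlo : -s < t) (hhi : t < (1 - √2) * s) :
    0 < s ∧ t < 0 := by
  have hsqrt2 : 1 < √2 := by rw [lt_sqrt zero_le_one]; norm_num
  have hsqrt2' : √2 < 2 := by rw [sqrt_lt' two_pos]; norm_num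
  have hs : 0 < s := pos_of_mul_pos_right (by linarith : 0 < (2 - √2) * s) (by linarith)
  exact ⟨hs, by nlinarith⟩

lemma sq_add_mul_sub_lt_sq_mul (hlo : -s < t) (hhi : t < (1 - √2) * s) :
    (s ^ 2 + t * (s - t)) ^ 2 < (t * s) ^ 2 := by
  obtain ⟨hs, ht⟩ := pos_and_neg_of_neg_lt_of_lt_one_sub_sqrt_two_mul hlo hhi
  have hts : t ^ 2 < s ^ 2 := sq_lt_sq' hlo (by linarith)
  have hgap : 2 * s ^ 2 < (s - t) ^ 2 := by
    have hlt : √2 * s < s - t := by linarith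
    calc 2 * s ^ 2 = (√2 * s) ^ 2 := by rw [mul_pow, sq_sqrt zero_le_two]
      _ < (s - t) ^ 2 := pow_lt_pow_left₀ hlt (by positivity) two_ne_zero
  have hfactor : (t * s) ^ 2 - (s ^ 2 + t * (s - t)) ^ 2 =
      (s ^ 2 - t ^ 2) * ((s - t) ^ 2 - 2 * s ^ 2) := by
    ring
  rw [← sub_pos, hfactor]
  exact mul_pos (sub_pos.2 hts) (sub_pos.2 hgap)

lemma pow_four_mul_div_sub_mul_div_eq (a : ℝ) (hs : s ≠ 0) :
    t ^ 4 * a ^ 2 / s ^ 4 - t ^ 2 * a ^ 2 * (s ^ 2 + t * (s - t)) ^ 2 / s ^ 6 =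
      (t * a / s ^ 3) ^ 2 * ((t * s) ^ 2 - (s ^ 2 + t * (s - t)) ^ 2) := by
  field_simp

lemma mul_sq_div_le_pow_four_mul_div (a : ℝ) (hlo : -s < t) (hhi : t < (1 - √2) * s) :
    t ^ 2 * a ^ 2 * (s ^ 2 + t * (s - t)) ^ 2 / s ^ 6 ≤ t ^ 4 * a ^ 2 / s ^ 4 := by
  have hs := (pos_and_neg_of_neg_lt_of_lt_one_sub_sqrt_two_mul hlo hhi).1.ne'
  rw [← sub_nonneg, pow_four_mul_div_sub_mul_div_eq a hs]
  exact mul_nonneg (sq_nonneg _) (sub_nonneg.2 (sq_add_mul_sub_lt_sq_mul hlo hhi).le)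

lemma mul_sq_div_lt_pow_four_mul_div {a : ℝ} (ha : a ≠ 0) (hlo : -s < t)
    (hhi : t < (1 - √2) * s) :
    t ^ 2 * a ^ 2 * (s ^ 2 + t * (s - t)) ^ 2 / s ^ 6 < t ^ 4 * a ^ 2 / s ^ 4 := by
  obtain ⟨hs, ht⟩ := pos_and_neg_of_neg_lt_of_lt_one_sub_sqrt_two_mul hlo hhi
  rw [← sub_pos, pow_four_mul_div_sub_mul_div_eq a hs.ne']
  exact mul_pos (sq_pos_of_ne_zero (div_ne_zero (mul_ne_zero ht.ne ha) (pow_ne_zero _ hs.ne')))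
    (sub_pos.2 (sq_add_mul_sub_lt_sq_mul hlo hhi))

end

theorem sb_AULTE_sub_sb_MAULTE_pos_general (p : ℕ)
    (lam α : Fin p → ℝ) (k d : ℝ)
    (hd₁ : ∀ j, -lam j - 2 * k < d)
    (hd₂ : ∀ j, d < lam j - Real.sqrt 2 * (lam j + k))
    (hα : ∃ j, α j ≠ 0) :
    (∑ j, (k + d) ^ 4 * (α j) ^ 2 / (lam j + k) ^ 4) -
      (∑ j, (k + d) ^ 2 * (α j) ^ 2 *
        ((lam j + k) ^ 2 + (k + d) * (lam j - d)) ^ 2 / (lam j + k) ^ 6) > 0 := by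
  have hlo : ∀ j, -(lam j + k) < k + d := fun j => by linarith [hd₁ j]
  have hhi : ∀ j, k + d < (1 - √2) * (lam j + k) := fun j => by linarith [hd₂ j]
  have hsub : ∀ j, lam j - d = (lam j + k) - (k + d) := fun j => by ring
  obtain ⟨j₀, hj₀⟩ := hα
  simp only [hsub, gt_iff_lt, sub_pos]
  exact sum_lt_sum (fun j _ => mul_sq_div_le_pow_four_mul_div (α j) (hlo j) (hhi j))
    ⟨j₀, mem_univ _, mul_sq_div_lt_pow_four_mul_div hj₀ (hlo j₀) (hhi j₀)⟩

/-- If `−λ_j − 2k < d < λ_j − √2·(λ_j + k)` for all `j`, and some `α_j ≠ 0`,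
then the squared bias of MAULTE is strictly smaller than that of AULTE. -/
theorem sb_AULTE_sub_sb_MAULTE_pos (p : ℕ) (hp : 1 ≤ p)
    (lam α : Fin p → ℝ) (hlam : ∀ j, 0 < lam j) (k d : ℝ) (hk : 0 < k)
    (hd₁ : ∀ j, -lam j - 2 * k < d)
    (hd₂ : ∀ j, d < lam j - Real.sqrt 2 * (lam j + k))
    (hα : ∃ j, α j ≠ 0) :
    (∑ j, (k + d) ^ 4 * (α j) ^ 2 / (lam j + k) ^ 4) -
      (∑ j, (k + d) ^ 2 * (α j) ^ 2 *
        ((lam j + k) ^ 2 + (k + d) * (lam j - d)) ^ 2 / (lam j + k) ^ 6) > 0 :=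
  sb_AULTE_sub_sb_MAULTE_pos_general p lam α k d hd₁ hd₂ hα
end

section
/- Suppose −(k + d)(2λ_j + 3k + d) > 0 for all j = 1,…,p. Then Var_LTE − Var_AULTE > 0; that is, the almost unbiased Liu-type estimator has strictly smaller total variance than the Liu-type estimator. -/
open Finset

namespace LiuType

variable {lam k d : ℝ}

-- `(λ + k)² - (λ + 2k + d)² = -(k + d)(2λ + 3k + d)` after clearing denominators.
theorem varLTE_term_sub_varAULTE_term (hlam : lam ≠ 0) (hlk : lam + k ≠ 0) :
    (lam - d) ^ 2 / (lam * (lam + k) ^ 2) -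
        (lam - d) ^ 2 * (lam + 2 * k + d) ^ 2 / (lam * (lam + k) ^ 4) =
      (lam - d) ^ 2 / (lam * (lam + k) ^ 4) * (-(k + d) * (2 * lam + 3 * k + d)) := by
  field_simp
  ring

-- At `d = λ` the factor is `-3(λ + k)² ≤ 0`.
theorem ne_of_neg_mul_pos (h : -(k + d) * (2 * lam + 3 * k + d) > 0) : lam ≠ d := by
  rintro rfl
  nlinarith [sq_nonneg (lam + k)]

theorem varLTE_term_sub_varAULTE_term_pos (hlam : 0 < lam) (hlk : lam + k ≠ 0)
    (h : -(k + d) * (2 * lam + 3 * k + d) > 0) :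
    0 < (lam - d) ^ 2 / (lam * (lam + k) ^ 2) -
        (lam - d) ^ 2 * (lam + 2 * k + d) ^ 2 / (lam * (lam + k) ^ 4) := by
  have hd : lam - d ≠ 0 := sub_ne_zero.mpr (ne_of_neg_mul_pos h)
  rw [varLTE_term_sub_varAULTE_term hlam.ne' hlk]
  positivity

end LiuType

/-- If `−(k + d)(2λ_j + 3k + d) > 0` for all `j`, then the AULTE has strictly
smaller total variance than the LTE. -/
theorem var_LTE_sub_var_AULTE_pos (p : ℕ) (hp : 1 ≤ p)
    (lam : Fin p → ℝ) (hlam : ∀ j, 0 < lam j) (k d : ℝ) (hk : 0 < k)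
    (h : ∀ j, -(k + d) * (2 * lam j + 3 * k + d) > 0) :
    (∑ j, (lam j - d) ^ 2 / (lam j * (lam j + k) ^ 2)) -
      (∑ j, (lam j - d) ^ 2 * (lam j + 2 * k + d) ^ 2 / (lam j * (lam j + k) ^ 4)) > 0 := by
  have : Nonempty (Fin p) := ⟨⟨0, hp⟩⟩
  rw [← sum_sub_distrib]
  exact sum_pos (fun j _ => LiuType.varLTE_term_sub_varAULTE_term_pos (hlam j)
    (add_pos (hlam j) hk).ne' (h j)) univ_nonempty
end

section
/- (Trenkler–Toutenburg lemma.) Let D be a symmetric positive definite real p×p matrix and let a₁, a₂ ∈ ℝ^p. Then a₂ᵀ (D + a₁a₁ᵀ)⁻¹ a₂ < 1 if and only if the matrix D + a₁a₁ᵀ − a₂a₂ᵀ is positive definite. -/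
/-!
Put `M = D + a₁a₁ᵀ`, which is positive definite, and `b = M⁻¹a₂`, so that `Mb = a₂` and
`c := a₂ᵀM⁻¹a₂ = bᵀMb`. The quadratic form of `M - a₂a₂ᵀ` is `xᵀMx - (a₂ᵀx)² = xᵀMx - (bᵀMx)²`.
By Cauchy–Schwarz for the inner product `⟨x, y⟩ = xᵀMy` this is at least `(1 - c) xᵀMx`, which
is positive for `x ≠ 0` when `c < 1`; conversely, its value `c (1 - c)` at `x = b` forces `c < 1`.
-/

open Matrix

namespace Matrix

variable {n : Type*} [Fintype n]

theorem posSemidef_vecMulVec_self (a : n → ℝ) : (vecMulVec a a).PosSemidef := by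
  simpa using posSemidef_vecMulVec_self_star a

theorem dotProduct_vecMulVec_self_mulVec (a x : n → ℝ) :
    x ⬝ᵥ vecMulVec a a *ᵥ x = (a ⬝ᵥ x) ^ 2 := by
  rw [vecMulVec_mulVec, op_smul_eq_smul, dotProduct_smul, smul_eq_mul, dotProduct_comm x a, sq]

theorem IsSymm.dotProduct_mulVec_comm {M : Matrix n n ℝ} (hM : M.IsSymm) (x y : n → ℝ) :
    x ⬝ᵥ M *ᵥ y = y ⬝ᵥ M *ᵥ x := by
  rw [dotProduct_mulVec, ← mulVec_transpose, hM.eq, dotProduct_comm]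

theorem PosSemidef.sq_dotProduct_mulVec_le {M : Matrix n n ℝ} (hM : M.PosSemidef) (x y : n → ℝ) :
    (x ⬝ᵥ M *ᵥ y) ^ 2 ≤ (x ⬝ᵥ M *ᵥ x) * (y ⬝ᵥ M *ᵥ y) := by
  let := M.toSeminormedAddCommGroup hM
  let := M.toInnerProductSpace hM
  have h := real_inner_mul_inner_self_le y x
  -- `M.toInnerProductSpace hM` has `⟪u, v⟫ = (M *ᵥ v) ⬝ᵥ star u`.
  change (M *ᵥ x) ⬝ᵥ star y * ((M *ᵥ x) ⬝ᵥ star y) ≤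
    (M *ᵥ y) ⬝ᵥ star y * ((M *ᵥ x) ⬝ᵥ star x) at h
  simp only [star_trivial, dotProduct_comm (M *ᵥ _)] at h
  rw [(isHermitian_iff_isSymm.mp hM.isHermitian).dotProduct_mulVec_comm x y, sq]
  linarith

variable [DecidableEq n]

theorem PosDef.posDef_sub_vecMulVec_self_iff {M : Matrix n n ℝ} (hM : M.PosDef) (a : n → ℝ) :
    (M - vecMulVec a a).PosDef ↔ a ⬝ᵥ M⁻¹ *ᵥ a < 1 := by
  set b := M⁻¹ *ᵥ a
  have hMb : M *ᵥ b = a := by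
    simp only [b, mulVec_mulVec, mul_nonsing_inv M (isUnit_iff_ne_zero.mpr hM.det_pos.ne'),
      one_mulVec]
  have hsymm : M.IsSymm := isHermitian_iff_isSymm.mp hM.isHermitian
  have hform (x : n → ℝ) :
      x ⬝ᵥ (M - vecMulVec a a) *ᵥ x = x ⬝ᵥ M *ᵥ x - (b ⬝ᵥ M *ᵥ x) ^ 2 := by
    rw [sub_mulVec, dotProduct_sub, dotProduct_vecMulVec_self_mulVec,
      hsymm.dotProduct_mulVec_comm b x, hMb, dotProduct_comm x a]
  have hc : a ⬝ᵥ M⁻¹ *ᵥ a = b ⬝ᵥ M *ᵥ b := by rw [hMb, dotProduct_comm]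
  rw [hc]
  constructor
  · intro hpos
    by_cases hb : b = 0
    · simp [hb]
    have hb_pos := hpos.dotProduct_mulVec_pos hb
    rw [star_trivial, hform] at hb_pos
    nlinarith
  · intro hlt
    refine .of_dotProduct_mulVec_pos (hM.isHermitian.sub (posSemidef_vecMulVec_self a).isHermitian)
      fun x hx => ?_
    have hMx : 0 < x ⬝ᵥ M *ᵥ x := by simpa using hM.dotProduct_mulVec_pos hx
    rw [star_trivial, hform]
    nlinarith [hM.posSemidef.sq_dotProduct_mulVec_le b x]

end Matrix

/-- Trenkler–Toutenburg lemma: For a symmetric positive definite `D` and vectors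
`a₁, a₂`, one has `a₂ᵀ (D + a₁a₁ᵀ)⁻¹ a₂ < 1` iff `D + a₁a₁ᵀ − a₂a₂ᵀ` is positive definite. -/
theorem trenkler_toutenburg (p : ℕ) (D : Matrix (Fin p) (Fin p) ℝ) (hD : D.PosDef)
    (a₁ a₂ : Fin p → ℝ) :
    a₂ ⬝ᵥ (D + vecMulVec a₁ a₁)⁻¹ *ᵥ a₂ < 1 ↔
      (D + vecMulVec a₁ a₁ - vecMulVec a₂ a₂).PosDef :=
  ((hD.add_posSemidef (posSemidef_vecMulVec_self a₁)).posDef_sub_vecMulVec_self_iff a₂).symm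
end

section
/- The difference of covariance matrices of the Liu-type estimator and the almost unbiased Liu-type estimator admits the spectral decomposition Cov_LTE − Cov_AULTE = Q · diag( (λ_j − d)² · (−(k+d)(2λ_j + 3k + d)) / (λ_j (λ_j + k)⁴) ; j = 1,…,p ) · Qᵀ. -/
open Matrix

/-- Covariance matrix of the Liu-type estimator (LTE). -/
noncomputable def covLTE {p : ℕ} (V : Matrix (Fin p) (Fin p) ℝ) (k d : ℝ) :
    Matrix (Fin p) (Fin p) ℝ :=
  (V + k • 1)⁻¹ * (V - d • 1) * V⁻¹ * (V - d • 1) * (V + k • 1)⁻¹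

/-- Covariance matrix of the almost unbiased Liu-type estimator (AULTE). -/
noncomputable def covAULTE {p : ℕ} (V : Matrix (Fin p) (Fin p) ℝ) (k d : ℝ) :
    Matrix (Fin p) (Fin p) ℝ :=
  (1 - (k + d) ^ 2 • ((V + k • 1)⁻¹) ^ 2) * V⁻¹ * (1 - (k + d) ^ 2 • ((V + k • 1)⁻¹) ^ 2)

/-- The matrix `M` entering the modified almost unbiased Liu-type estimator (MAULTE). -/
noncomputable def mMAULTE {p : ℕ} (V : Matrix (Fin p) (Fin p) ℝ) (k d : ℝ) :
    Matrix (Fin p) (Fin p) ℝ :=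
  (1 - (k + d) ^ 2 • ((V + k • 1)⁻¹) ^ 2) * (1 - (k + d) • (V + k • 1)⁻¹)

/-- Covariance matrix of the MAULTE. -/
noncomputable def covMAULTE {p : ℕ} (V : Matrix (Fin p) (Fin p) ℝ) (k d : ℝ) :
    Matrix (Fin p) (Fin p) ℝ :=
  mMAULTE V k d * V⁻¹ * (mMAULTE V k d)ᵀ

/-- Bias vector of the LTE. -/
noncomputable def biasLTE {p : ℕ} (V : Matrix (Fin p) (Fin p) ℝ) (k d : ℝ) (β : Fin p → ℝ) :
    Fin p → ℝ :=
  (-(d + k)) • ((V + k • 1)⁻¹ *ᵥ β)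

/-- Bias vector of the AULTE. -/
noncomputable def biasAULTE {p : ℕ} (V : Matrix (Fin p) (Fin p) ℝ) (k d : ℝ) (β : Fin p → ℝ) :
    Fin p → ℝ :=
  (-(d + k) ^ 2) • (((V + k • 1)⁻¹) ^ 2 *ᵥ β)

/-- Bias vector of the MAULTE. -/
noncomputable def biasMAULTE {p : ℕ} (V : Matrix (Fin p) (Fin p) ℝ) (k d : ℝ) (β : Fin p → ℝ) :
    Fin p → ℝ :=
  (-(d + k)) •
    (((1 + (d + k) • (V + k • 1)⁻¹ - (d + k) ^ 2 • ((V + k • 1)⁻¹) ^ 2) * (V + k • 1)⁻¹) *ᵥ β)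

/-- Matrix mean squared error built from a covariance matrix and a bias vector. -/
noncomputable def mmse {p : ℕ} (C : Matrix (Fin p) (Fin p) ℝ) (b : Fin p → ℝ) :
    Matrix (Fin p) (Fin p) ℝ :=
  C + vecMulVec b b

/-!
Conjugation `f ↦ Q · diag f · Qᵀ` by an orthogonal `Q` is an algebra homomorphism from `ℝᵖ`
(with pointwise operations) to matrices, and it also carries pointwise inverses of nowhere-vanishing
vectors to matrix inverses. Hence both covariance matrices are the images of the same formulas
evaluated eigenvalue by eigenvalue, and the theorem reduces to a rational identity in `λⱼ`.
-/

namespace Matrix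

variable {n R : Type*} [Fintype n] [DecidableEq n] [CommRing R] [StarRing R]

def unitaryConjDiagonal (U : unitaryGroup n R) : (n → R) →ₐ[R] Matrix n n R :=
  ((Unitary.conjStarAlgAut R (Matrix n n R) U).toAlgEquiv : Matrix n n R →ₐ[R] Matrix n n R).comp
    (diagonalAlgHom R)

theorem unitaryConjDiagonal_apply (U : unitaryGroup n R) (f : n → R) :
    unitaryConjDiagonal U f = U * diagonal f * star (U : Matrix n n R) :=
  rfl

theorem nonsing_inv_map_pi {ι m K F : Type*} [Fintype m] [DecidableEq m] [Field K]
    [FunLike F (ι → K) (Matrix m m K)] [MonoidHomClass F (ι → K) (Matrix m m K)]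
    (ψ : F) {f : ι → K} (hf : ∀ i, f i ≠ 0) : (ψ f)⁻¹ = ψ f⁻¹ :=
  inv_eq_left_inv <| by
    rw [← map_mul, show f⁻¹ * f = 1 from funext fun i => inv_mul_cancel₀ (hf i), map_one]

end Matrix

section AlgHomImage

variable {p : ℕ} (φ : (Fin p → ℝ) →ₐ[ℝ] Matrix (Fin p) (Fin p) ℝ) {lam : Fin p → ℝ} {k : ℝ}

theorem covLTE_map (hlam : ∀ j, lam j ≠ 0) (hlamk : ∀ j, lam j + k ≠ 0) (d : ℝ) :
    covLTE (φ lam) k d =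
      φ ((lam + k • 1)⁻¹ * (lam - d • 1) * lam⁻¹ * (lam - d • 1) * (lam + k • 1)⁻¹) := by
  have hk : ∀ j, (lam + k • 1) j ≠ 0 := by simpa using hlamk
  rw [covLTE, ← map_one φ, ← map_smul, ← map_smul, ← map_add, ← map_sub,
    Matrix.nonsing_inv_map_pi φ hlam, Matrix.nonsing_inv_map_pi φ hk]
  simp only [map_mul]

theorem covAULTE_map (hlam : ∀ j, lam j ≠ 0) (hlamk : ∀ j, lam j + k ≠ 0) (d : ℝ) :
    covAULTE (φ lam) k d =
      φ ((1 - (k + d) ^ 2 • ((lam + k • 1)⁻¹) ^ 2) * lam⁻¹ *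
        (1 - (k + d) ^ 2 • ((lam + k • 1)⁻¹) ^ 2)) := by
  have hk : ∀ j, (lam + k • 1) j ≠ 0 := by simpa using hlamk
  rw [covAULTE, ← map_one φ, ← map_smul, ← map_add,
    Matrix.nonsing_inv_map_pi φ hlam, Matrix.nonsing_inv_map_pi φ hk]
  simp only [map_mul, map_sub, map_smul, map_pow, map_one]

end AlgHomImage

/-- Spectral decomposition of `Cov_LTE − Cov_AULTE`. -/
theorem covLTE_sub_covAULTE_eq (p : ℕ) (Q : Matrix (Fin p) (Fin p) ℝ) (hQ : Q * Qᵀ = 1)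
    (lam : Fin p → ℝ) (hlam : ∀ j, 0 < lam j) (k d : ℝ) (hk : 0 < k) :
    covLTE (Q * Matrix.diagonal lam * Qᵀ) k d - covAULTE (Q * Matrix.diagonal lam * Qᵀ) k d =
      Q * Matrix.diagonal (fun j =>
        (lam j - d) ^ 2 * (-(k + d) * (2 * lam j + 3 * k + d)) /
          (lam j * (lam j + k) ^ 4)) * Qᵀ := by
  have hU : Q ∈ unitaryGroup (Fin p) ℝ := by
    rwa [mem_unitaryGroup_iff, star_eq_conjTranspose, conjTranspose_eq_transpose_of_trivial]
  set φ := unitaryConjDiagonal ⟨Q, hU⟩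
  have hφ (f : Fin p → ℝ) : Q * diagonal f * Qᵀ = φ f := by
    rw [unitaryConjDiagonal_apply, star_eq_conjTranspose, conjTranspose_eq_transpose_of_trivial]
  have hlam0 (j : Fin p) : lam j ≠ 0 := (hlam j).ne'
  have hlamk (j : Fin p) : lam j + k ≠ 0 := (add_pos (hlam j) hk).ne'
  rw [hφ, hφ, covLTE_map φ hlam0 hlamk, covAULTE_map φ hlam0 hlamk, ← map_sub]
  congr 1
  ext j
  have := hlam0 j
  have := hlamk j
  simp only [Pi.sub_apply, Pi.mul_apply, Pi.add_apply, Pi.smul_apply, Pi.inv_apply, Pi.pow_apply,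
    Pi.one_apply, smul_eq_mul, mul_one]
  field_simp
  ring
end

section
/- Suppose −(k + d)(2λ_j + 3k + d) > 0 for all j = 1,…,p. Then the matrix S₁ = Cov_LTE − Cov_AULTE is positive definite. -/
/-!
Writing `V = Q Λ Qᵀ`, conjugation by the orthogonal matrix `Q` is an algebra automorphism of the
matrix algebra and so commutes with the matrix inverse; hence both covariance matrices are
`Q (·) Qᵀ`-conjugates of the same expressions in the diagonal matrix `Λ`. There the difference is
diagonal with entries `(λ - d)² (-(k + d)) (2λ + 3k + d) / (λ (λ + k)⁴)`, positive under the
hypothesis, which also excludes `λ = d` and `λ + k = 0`.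
-/

open Matrix

namespace Matrix

variable {n R : Type*} [Fintype n] [DecidableEq n]

theorem map_nonsing_inv [CommRing R] {F : Type*} [EquivLike F (Matrix n n R) (Matrix n n R)]
    [MulEquivClass F (Matrix n n R) (Matrix n n R)] (f : F) (A : Matrix n n R) :
    f A⁻¹ = (f A)⁻¹ := by
  by_cases hA : IsUnit A
  · refine (inv_eq_left_inv ?_).symm
    rw [← map_mul, nonsing_inv_mul _ ((isUnit_iff_isUnit_det A).mp hA), map_one]
  · rw [nonsing_inv_eq_ringInverse, nonsing_inv_eq_ringInverse, Ring.inverse_non_unit _ hA,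
      Ring.inverse_non_unit _ ((isUnit_map_iff f A).not.mpr hA), map_zero]

theorem inv_diagonal_of_ne_zero [Field R] {v : n → R} (hv : ∀ i, v i ≠ 0) :
    (diagonal v)⁻¹ = diagonal v⁻¹ := by
  refine inv_eq_left_inv ?_
  rw [diagonal_mul_diagonal, ← diagonal_one]
  exact congrArg diagonal (funext fun i => inv_mul_cancel₀ (hv i))

end Matrix

section

variable {p : ℕ} {F : Type*} [EquivLike F (Matrix (Fin p) (Fin p) ℝ) (Matrix (Fin p) (Fin p) ℝ)]
  [AlgEquivClass F ℝ (Matrix (Fin p) (Fin p) ℝ) (Matrix (Fin p) (Fin p) ℝ)]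

theorem covLTE_map_s8 (f : F) (V : Matrix (Fin p) (Fin p) ℝ) (k d : ℝ) :
    covLTE (f V) k d = f (covLTE V k d) := by
  simp only [covLTE, map_mul, map_nonsing_inv, map_add, map_sub, map_smul, map_one]

theorem covAULTE_map_s8 (f : F) (V : Matrix (Fin p) (Fin p) ℝ) (k d : ℝ) :
    covAULTE (f V) k d = f (covAULTE V k d) := by
  simp only [covAULTE, map_mul, map_nonsing_inv, map_add, map_sub, map_smul, map_one, map_pow]

end

section

variable {p : ℕ} {lam : Fin p → ℝ} {k : ℝ}

theorem covLTE_diagonal (hlam : ∀ j, lam j ≠ 0) (hk : ∀ j, lam j + k ≠ 0) (d : ℝ) :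
    covLTE (diagonal lam) k d =
      diagonal fun j => (lam j - d) ^ 2 / (lam j * (lam j + k) ^ 2) := by
  rw [covLTE, smul_one_eq_diagonal, smul_one_eq_diagonal, diagonal_add, diagonal_sub,
    inv_diagonal_of_ne_zero hk, inv_diagonal_of_ne_zero hlam]
  simp only [diagonal_mul_diagonal]
  congr 1
  funext j
  simp only [Pi.inv_apply]
  field_simp

theorem covAULTE_diagonal (hlam : ∀ j, lam j ≠ 0) (hk : ∀ j, lam j + k ≠ 0) (d : ℝ) :
    covAULTE (diagonal lam) k d =
      diagonal fun j => (1 - (k + d) ^ 2 / (lam j + k) ^ 2) ^ 2 / lam j := by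
  rw [covAULTE, smul_one_eq_diagonal, diagonal_add, inv_diagonal_of_ne_zero hk,
    inv_diagonal_of_ne_zero hlam, diagonal_pow, ← diagonal_smul, ← diagonal_one, diagonal_sub]
  simp only [diagonal_mul_diagonal]
  congr 1
  funext j
  simp only [Pi.inv_apply, Pi.smul_apply, Pi.pow_apply, smul_eq_mul]
  field_simp

end

section

variable {l k d : ℝ}

theorem add_ne_zero_of_neg_mul_pos (h : 0 < -(k + d) * (2 * l + 3 * k + d)) : l + k ≠ 0 := by
  intro hlk
  obtain rfl : l = -k := eq_neg_of_add_eq_zero_left hlk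
  nlinarith [sq_nonneg (k + d)]

theorem sub_ne_zero_of_neg_mul_pos (h : 0 < -(k + d) * (2 * l + 3 * k + d)) : l - d ≠ 0 := by
  intro hld
  obtain rfl : l = d := sub_eq_zero.mp hld
  nlinarith [sq_nonneg (k + l)]

theorem covAULTE_eigenvalue_lt_covLTE_eigenvalue (hl : 0 < l)
    (h : 0 < -(k + d) * (2 * l + 3 * k + d)) :
    (1 - (k + d) ^ 2 / (l + k) ^ 2) ^ 2 / l < (l - d) ^ 2 / (l * (l + k) ^ 2) := by
  have hlk := add_ne_zero_of_neg_mul_pos h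
  have hld := sub_ne_zero_of_neg_mul_pos h
  have key : (l - d) ^ 2 / (l * (l + k) ^ 2) - (1 - (k + d) ^ 2 / (l + k) ^ 2) ^ 2 / l
      = (l - d) ^ 2 * (-(k + d) * (2 * l + 3 * k + d)) / (l * (l + k) ^ 4) := by
    field_simp
    ring
  rw [← sub_pos, key]
  positivity

end

theorem covLTE_sub_covAULTE_posDef_general (p : ℕ) (Q : Matrix (Fin p) (Fin p) ℝ) (hQ : Q * Qᵀ = 1)
    (lam : Fin p → ℝ) (hlam : ∀ j, 0 < lam j) (k d : ℝ)
    (h : ∀ j, -(k + d) * (2 * lam j + 3 * k + d) > 0) :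
    (covLTE (Q * Matrix.diagonal lam * Qᵀ) k d -
      covAULTE (Q * Matrix.diagonal lam * Qᵀ) k d).PosDef := by
  have hQu : Q ∈ unitaryGroup (Fin p) ℝ := by
    rwa [mem_unitaryGroup_iff, star_eq_conjTranspose, conjTranspose_eq_transpose_of_trivial]
  let φ := Unitary.conjStarAlgAut ℝ (Matrix (Fin p) (Fin p) ℝ) ⟨Q, hQu⟩
  have hφ (A : Matrix (Fin p) (Fin p) ℝ) : φ A = Q * A * Qᵀ := rfl
  have hlam0 j := (hlam j).ne'
  have hk j := add_ne_zero_of_neg_mul_pos (h j)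
  rw [← hφ, covLTE_map_s8, covAULTE_map_s8, ← map_sub, covLTE_diagonal hlam0 hk,
    covAULTE_diagonal hlam0 hk, diagonal_sub, hφ]
  refine (IsUnit.posDef_star_right_conjugate_iff (IsUnit.of_mul_eq_one _ hQ)).mpr ?_
  exact posDef_diagonal_iff.mpr fun j =>
    sub_pos.mpr (covAULTE_eigenvalue_lt_covLTE_eigenvalue (hlam j) (h j))

/-- If `−(k + d)(2λ_j + 3k + d) > 0` for all `j`, then
`S₁ = Cov_LTE − Cov_AULTE` is positive definite. -/
theorem covLTE_sub_covAULTE_posDef (p : ℕ) (Q : Matrix (Fin p) (Fin p) ℝ) (hQ : Q * Qᵀ = 1)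
    (lam : Fin p → ℝ) (hlam : ∀ j, 0 < lam j) (k d : ℝ) (hk : 0 < k)
    (h : ∀ j, -(k + d) * (2 * lam j + 3 * k + d) > 0) :
    (covLTE (Q * Matrix.diagonal lam * Qᵀ) k d -
      covAULTE (Q * Matrix.diagonal lam * Qᵀ) k d).PosDef :=
  covLTE_sub_covAULTE_posDef_general p Q hQ lam hlam k d h
end

section
/- Suppose (k + d)(2λ_j + k − d) > 0 and d ≠ λ_j for all j = 1,…,p. Then the matrix S₃ = Cov_AULTE − Cov_MAULTE is positive definite. -/
open Matrix

/-! Conjugation by an orthogonal `Q` is an algebra homomorphism `f ↦ Q diag(f) Qᵀ` out of the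
diagonal algebra, and it commutes with inversion; hence both covariance matrices are `Q diag(·) Qᵀ`
of scalar functions of the eigenvalues `λ` of `V`, and `S₃` is positive definite as soon as each
scalar difference is positive. With `b = (λ - d)/(λ + k)`, so that `(k + d)/(λ + k) = 1 - b`, the
two scalars are `(1 - (1 - b)²)²/λ` and `(1 - (1 - b)²)² b²/λ`. The hypothesis says `b² < 1`, since
`(k + d)(2λ + k - d) = (λ + k)² - (λ - d)²`, and `d ≠ λ` gives `1 - (1 - b)² = b(2 - b) ≠ 0`. -/

namespace Matrix

variable {n : Type*} [Fintype n] [DecidableEq n]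

section CommRing

variable {R : Type*} [CommRing R]

def diagConj (Q : Matrix n n R) (hQ : Q * Qᵀ = 1) : (n → R) →ₐ[R] Matrix n n R where
  toFun f := Q * diagonal f * Qᵀ
  map_one' := by simp [hQ]
  map_mul' f g := by
    simp only [Matrix.mul_assoc, ← Matrix.mul_assoc Qᵀ Q, mul_eq_one_comm.mp hQ, Matrix.one_mul,
      ← Matrix.mul_assoc (diagonal f), diagonal_mul_diagonal]
    rfl
  map_zero' := by simp
  map_add' f g := by
    simp only [← Matrix.add_mul, ← Matrix.mul_add, diagonal_add]
    rfl
  commutes' r := by simp [Algebra.algebraMap_eq_smul_one, hQ]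

variable {Q : Matrix n n R} (hQ : Q * Qᵀ = 1)

lemma diagConj_apply (f : n → R) : diagConj Q hQ f = Q * diagonal f * Qᵀ := rfl

lemma transpose_diagConj (f : n → R) : (diagConj Q hQ f)ᵀ = diagConj Q hQ f := by
  simp [diagConj_apply, Matrix.mul_assoc]

lemma diagConj_add_smul_one (f : n → R) (k : R) :
    diagConj Q hQ f + k • 1 = diagConj Q hQ (fun j => f j + k) := by
  rw [← map_one (diagConj Q hQ), ← map_smul, ← map_add]
  congr 1
  ext j
  simp

end CommRing

section Field

variable {K : Type*} [Field K] {Q : Matrix n n K} (hQ : Q * Qᵀ = 1)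

lemma inv_diagConj {f : n → K} (hf : ∀ j, f j ≠ 0) : (diagConj Q hQ f)⁻¹ = diagConj Q hQ f⁻¹ := by
  refine inv_eq_right_inv ?_
  rw [← map_mul, ← map_one (diagConj Q hQ)]
  congr 1
  funext j
  exact mul_inv_cancel₀ (hf j)

lemma posDef_diagConj_iff [PartialOrder K] [StarRing K] [TrivialStar K] [StarOrderedRing K]
    {f : n → K} :
    (diagConj Q hQ f).PosDef ↔ ∀ j, 0 < f j := by
  rw [diagConj_apply, ← conjTranspose_eq_transpose_of_trivial, ← star_eq_conjTranspose,
    Matrix.IsUnit.posDef_star_right_conjugate_iff (IsUnit.of_mul_eq_one _ hQ), posDef_diagonal_iff]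

end Field

end Matrix

noncomputable def varAULTE (l k d : ℝ) : ℝ := (1 - ((k + d) / (l + k)) ^ 2) ^ 2 / l

noncomputable def varMAULTE (l k d : ℝ) : ℝ :=
  ((1 - ((k + d) / (l + k)) ^ 2) * (1 - (k + d) / (l + k))) ^ 2 / l

lemma add_ne_zero_of_mul_pos {l k d : ℝ} (h : 0 < (k + d) * (2 * l + k - d)) : l + k ≠ 0 := by
  intro hlk
  nlinarith [sq_nonneg (l - d)]

lemma varMAULTE_lt_varAULTE {l k d : ℝ} (hl : 0 < l) (h : 0 < (k + d) * (2 * l + k - d))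
    (hdl : d ≠ l) : varMAULTE l k d < varAULTE l k d := by
  have hlk := add_ne_zero_of_mul_pos h
  set b := (l - d) / (l + k) with hb_def
  have hb : b ^ 2 < 1 := by
    rw [div_pow, div_lt_one (by positivity)]
    linarith [show (k + d) * (2 * l + k - d) = (l + k) ^ 2 - (l - d) ^ 2 by ring]
  have ha : (k + d) / (l + k) = 1 - b := by
    rw [hb_def]
    field_simp
    ring
  have hb0 : b ≠ 0 := div_ne_zero (sub_ne_zero.2 hdl.symm) hlk
  have ht : 1 - (1 - b) ^ 2 ≠ 0 := by
    have : 1 - (1 - b) ^ 2 = b * (2 - b) := by ring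
    rw [this]
    exact mul_ne_zero hb0 (by nlinarith)
  rw [varAULTE, varMAULTE, ha, sub_sub_cancel, mul_pow]
  apply div_lt_div_of_pos_right _ hl
  exact mul_lt_of_lt_one_right (sq_pos_of_ne_zero ht) hb

section

variable {p : ℕ} {Q : Matrix (Fin p) (Fin p) ℝ} (hQ : Q * Qᵀ = 1) {f : Fin p → ℝ} {k d : ℝ}

lemma covAULTE_diagConj (hf : ∀ j, f j ≠ 0) (hfk : ∀ j, f j + k ≠ 0) :
    covAULTE (diagConj Q hQ f) k d = diagConj Q hQ (fun j => varAULTE (f j) k d) := by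
  rw [covAULTE, diagConj_add_smul_one, inv_diagConj hQ hfk, inv_diagConj hQ hf, ← map_pow,
    ← map_smul, ← map_one (diagConj Q hQ), ← map_sub, ← map_mul, ← map_mul]
  congr 1
  funext j
  simp only [varAULTE, Pi.mul_apply, Pi.sub_apply, Pi.one_apply, Pi.smul_apply, Pi.inv_apply,
    Pi.pow_apply, smul_eq_mul]
  field_simp

lemma covMAULTE_diagConj (hf : ∀ j, f j ≠ 0) (hfk : ∀ j, f j + k ≠ 0) :
    covMAULTE (diagConj Q hQ f) k d = diagConj Q hQ (fun j => varMAULTE (f j) k d) := by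
  have hM : mMAULTE (diagConj Q hQ f) k d = diagConj Q hQ
      ((1 - (k + d) ^ 2 • ((fun j => f j + k)⁻¹) ^ 2) * (1 - (k + d) • (fun j => f j + k)⁻¹)) := by
    rw [mMAULTE, diagConj_add_smul_one, inv_diagConj hQ hfk, map_mul, map_sub, map_sub, map_one,
      map_smul, map_smul, map_pow]
  rw [covMAULTE, hM, transpose_diagConj, inv_diagConj hQ hf, ← map_mul, ← map_mul]
  congr 1
  funext j
  simp only [varMAULTE, Pi.mul_apply, Pi.sub_apply, Pi.one_apply, Pi.smul_apply, Pi.inv_apply,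
    Pi.pow_apply, smul_eq_mul]
  field_simp

end

theorem covAULTE_sub_covMAULTE_posDef_general (p : ℕ) (Q : Matrix (Fin p) (Fin p) ℝ) (hQ : Q * Qᵀ = 1)
    (lam : Fin p → ℝ) (hlam : ∀ j, 0 < lam j) (k d : ℝ)
    (h : ∀ j, (k + d) * (2 * lam j + k - d) > 0) (hdl : ∀ j, d ≠ lam j) :
    (covAULTE (Q * Matrix.diagonal lam * Qᵀ) k d -
      covMAULTE (Q * Matrix.diagonal lam * Qᵀ) k d).PosDef := by
  have hlam0 : ∀ j, lam j ≠ 0 := fun j => (hlam j).ne'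
  have hlamk : ∀ j, lam j + k ≠ 0 := fun j => add_ne_zero_of_mul_pos (h j)
  rw [← diagConj_apply hQ, covAULTE_diagConj hQ hlam0 hlamk, covMAULTE_diagConj hQ hlam0 hlamk,
    ← map_sub, posDef_diagConj_iff]
  exact fun j => sub_pos.2 (varMAULTE_lt_varAULTE (hlam j) (h j) (hdl j))

/-- If `(k + d)(2λ_j + k − d) > 0` and `d ≠ λ_j` for all `j`, then
`S₃ = Cov_AULTE − Cov_MAULTE` is positive definite. -/
theorem covAULTE_sub_covMAULTE_posDef (p : ℕ) (Q : Matrix (Fin p) (Fin p) ℝ) (hQ : Q * Qᵀ = 1)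
    (lam : Fin p → ℝ) (hlam : ∀ j, 0 < lam j) (k d : ℝ) (hk : 0 < k)
    (h : ∀ j, (k + d) * (2 * lam j + k - d) > 0) (hdl : ∀ j, d ≠ lam j) :
    (covAULTE (Q * Matrix.diagonal lam * Qᵀ) k d -
      covMAULTE (Q * Matrix.diagonal lam * Qᵀ) k d).PosDef :=
  covAULTE_sub_covMAULTE_posDef_general p Q hQ lam hlam k d h hdl
end

section
/- The scalar mean squared error of the modified almost unbiased Liu-type estimator satisfies trace(Cov_MAULTE) + b_MAULTEᵀ b_MAULTE = Σ_{j=1}^p (λ_j − d)⁴(λ_j + d + 2k)²/(λ_j (λ_j + k)⁶) + (k + d)² Σ_{j=1}^p α_j² ((λ_j + k)² + (k + d)(λ_j − d))²/(λ_j + k)⁶, where α = Qᵀβ. -/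
/-!
Since `Q` is orthogonal, `f ↦ Q * diagonal f * Qᵀ` is an algebra homomorphism on `Fin p → ℝ`
that also preserves inverses, so every matrix built from `V = Q Λ Qᵀ` in the statement is
`Q * diagonal m * Qᵀ` for an explicit rational function `m` of the eigenvalues. The trace of the
covariance is then `∑ m(λ_j)`, the bias is `Q` applied to the coordinatewise rescaling of
`α = Qᵀβ`, whose squared length `Q` preserves, and what is left is a scalar identity per eigenvalue.
-/

open Matrix

namespace Matrix

variable {n R : Type*} [Fintype n] [DecidableEq n]

section CommRing

variable [CommRing R] {Q : Matrix n n R}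

def orthoConjDiagonal (hQ : Q * Qᵀ = 1) : (n → R) →ₐ[R] Matrix n n R where
  toFun f := Q * diagonal f * Qᵀ
  map_one' := by rw [diagonal_one', Matrix.mul_one, hQ]
  map_mul' f g := by
    have hQ' : Qᵀ * Q = 1 := mul_eq_one_comm.mp hQ
    simp only [Matrix.mul_assoc]
    rw [← Matrix.mul_assoc Qᵀ Q, hQ', Matrix.one_mul, ← Matrix.mul_assoc (diagonal f),
      diagonal_mul_diagonal]
    rfl
  map_zero' := by rw [diagonal_zero', Matrix.mul_zero, Matrix.zero_mul]
  map_add' f g := by rw [← show diagonal f + diagonal g = diagonal (f + g) from diagonal_add f g,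
    Matrix.mul_add, Matrix.add_mul]
  commutes' r := by
    rw [← algebraMap_eq_diagonal, Algebra.algebraMap_eq_smul_one, Matrix.mul_smul,
      Matrix.mul_one, Matrix.smul_mul, hQ]

variable (hQ : Q * Qᵀ = 1)
include hQ

theorem orthoConjDiagonal_apply (f : n → R) :
    orthoConjDiagonal hQ f = Q * diagonal f * Qᵀ := rfl

theorem transpose_orthoConjDiagonal (f : n → R) :
    (orthoConjDiagonal hQ f)ᵀ = orthoConjDiagonal hQ f := by
  simp only [orthoConjDiagonal_apply, transpose_mul, transpose_transpose, diagonal_transpose,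
    Matrix.mul_assoc]

theorem trace_orthoConjDiagonal (f : n → R) :
    (orthoConjDiagonal hQ f).trace = ∑ i, f i := by
  rw [orthoConjDiagonal_apply, trace_mul_comm, ← Matrix.mul_assoc, mul_eq_one_comm.mp hQ,
    Matrix.one_mul, trace_diagonal]

theorem orthoConjDiagonal_mulVec (f v : n → R) :
    orthoConjDiagonal hQ f *ᵥ v = Q *ᵥ (f * (Qᵀ *ᵥ v)) := by
  rw [orthoConjDiagonal_apply, ← mulVec_mulVec, ← mulVec_mulVec]
  exact congrArg _ (funext (mulVec_diagonal f _))

theorem dotProduct_self_mulVec_of_mul_transpose_eq_one (v : n → R) :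
    Q *ᵥ v ⬝ᵥ Q *ᵥ v = v ⬝ᵥ v := by
  rw [dotProduct_mulVec, ← vecMul_transpose, vecMul_vecMul, mul_eq_one_comm.mp hQ, vecMul_one]

end CommRing

theorem inv_orthoConjDiagonal {K : Type*} [Field K] {Q : Matrix n n K} (hQ : Q * Qᵀ = 1)
    {f : n → K} (hf : ∀ i, f i ≠ 0) : (orthoConjDiagonal hQ f)⁻¹ = orthoConjDiagonal hQ f⁻¹ := by
  refine inv_eq_right_inv ?_
  rw [← map_mul, show f * f⁻¹ = 1 from funext fun i => mul_inv_cancel₀ (hf i), map_one]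

end Matrix

section MAULTE

variable {p : ℕ} {Q : Matrix (Fin p) (Fin p) ℝ} (hQ : Q * Qᵀ = 1) {lam : Fin p → ℝ} (k d : ℝ)
include hQ

theorem inv_orthoConjDiagonal_add_smul_one (hlk : ∀ j, lam j + k ≠ 0) :
    (orthoConjDiagonal hQ lam + k • 1)⁻¹ = orthoConjDiagonal hQ (lam + k • 1)⁻¹ := by
  rw [← inv_orthoConjDiagonal hQ (by simpa using hlk), map_add, map_smul, map_one]

theorem mMAULTE_orthoConjDiagonal (hlk : ∀ j, lam j + k ≠ 0) :
    mMAULTE (orthoConjDiagonal hQ lam) k d =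
      orthoConjDiagonal hQ fun j => (lam j - d) ^ 2 * (lam j + d + 2 * k) / (lam j + k) ^ 3 := by
  rw [mMAULTE, inv_orthoConjDiagonal_add_smul_one hQ k hlk, ← map_one (orthoConjDiagonal hQ)]
  simp only [← map_pow, ← map_smul, ← map_sub, ← map_mul]
  congr 1
  funext j
  have := hlk j
  simp only [Pi.mul_apply, Pi.sub_apply, Pi.smul_apply, Pi.pow_apply, Pi.inv_apply,
    Pi.add_apply, Pi.one_apply, smul_eq_mul, mul_one]
  field_simp
  ring

theorem covMAULTE_orthoConjDiagonal (hlam : ∀ j, lam j ≠ 0) (hlk : ∀ j, lam j + k ≠ 0) :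
    covMAULTE (orthoConjDiagonal hQ lam) k d = orthoConjDiagonal hQ fun j =>
      (lam j - d) ^ 4 * (lam j + d + 2 * k) ^ 2 / (lam j * (lam j + k) ^ 6) := by
  rw [covMAULTE, mMAULTE_orthoConjDiagonal hQ k d hlk, transpose_orthoConjDiagonal,
    inv_orthoConjDiagonal hQ hlam, ← map_mul, ← map_mul]
  congr 1
  funext j
  have := hlam j
  have := hlk j
  simp only [Pi.mul_apply, Pi.inv_apply]
  field_simp

theorem biasMAULTE_orthoConjDiagonal (hlk : ∀ j, lam j + k ≠ 0) (β : Fin p → ℝ) :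
    biasMAULTE (orthoConjDiagonal hQ lam) k d β = Q *ᵥ fun j =>
      -(d + k) * ((lam j + k) ^ 2 + (k + d) * (lam j - d)) / (lam j + k) ^ 3 * (Qᵀ *ᵥ β) j := by
  rw [biasMAULTE, inv_orthoConjDiagonal_add_smul_one hQ k hlk, ← map_one (orthoConjDiagonal hQ)]
  simp only [← map_pow, ← map_smul, ← map_add, ← map_sub, ← map_mul]
  rw [orthoConjDiagonal_mulVec, ← mulVec_smul]
  congr 1
  funext j
  have := hlk j
  simp only [Pi.smul_apply, Pi.mul_apply, Pi.sub_apply, Pi.add_apply, Pi.pow_apply,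
    Pi.inv_apply, Pi.one_apply, smul_eq_mul, mul_one]
  field_simp
  ring

end MAULTE

/-- Scalar MSE of the MAULTE. -/
theorem mse_MAULTE_eq (p : ℕ) (Q : Matrix (Fin p) (Fin p) ℝ) (hQ : Q * Qᵀ = 1)
    (lam : Fin p → ℝ) (hlam : ∀ j, 0 < lam j) (k d : ℝ) (hk : 0 < k) (β : Fin p → ℝ) :
    (covMAULTE (Q * Matrix.diagonal lam * Qᵀ) k d).trace +
        biasMAULTE (Q * Matrix.diagonal lam * Qᵀ) k d β ⬝ᵥ
          biasMAULTE (Q * Matrix.diagonal lam * Qᵀ) k d β =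
      (∑ j, (lam j - d) ^ 4 * (lam j + d + 2 * k) ^ 2 / (lam j * (lam j + k) ^ 6)) +
        (k + d) ^ 2 * ∑ j, (Qᵀ *ᵥ β) j ^ 2 *
          ((lam j + k) ^ 2 + (k + d) * (lam j - d)) ^ 2 / (lam j + k) ^ 6 := by
  have hlk : ∀ j, lam j + k ≠ 0 := fun j => (add_pos (hlam j) hk).ne'
  have hV : Q * Matrix.diagonal lam * Qᵀ = orthoConjDiagonal hQ lam := rfl
  rw [hV, covMAULTE_orthoConjDiagonal hQ k d (fun j => (hlam j).ne') hlk,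
    trace_orthoConjDiagonal, biasMAULTE_orthoConjDiagonal hQ k d hlk,
    dotProduct_self_mulVec_of_mul_transpose_eq_one hQ, dotProduct, Finset.mul_sum]
  congr 1
  refine Finset.sum_congr rfl fun j _ => ?_
  have := hlk j
  field_simp
  ring
end

section
/- Let λ > 0, k > 0 and α ∈ ℝ, and define g : ℝ → ℝ by g(d) = (λ − d)²(λ + d + 2k)²/(λ(λ + k)⁴) + (k + d)⁴ α²/(λ + k)⁴. Then d* = −k + (λ + k)/√(1 + λα²) is a critical point of g, i.e. the derivative of g vanishes at d*: g′(d*) = 0. -/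
/-! Writing `u = k + d`, one has `(λ - d)(λ + d + 2k) = (λ + k)² - u²`, so the derivative of
`g` factors as `4u (u²(1 + λα²) - (λ + k)²) / (λ(λ + k)⁴)`; the second factor vanishes at
`u = (λ + k)/√(1 + λα²)`. -/

namespace LiuType

noncomputable def mseTerm (lam k α d : ℝ) : ℝ :=
  (lam - d) ^ 2 * (lam + d + 2 * k) ^ 2 / (lam * (lam + k) ^ 4) +
    (k + d) ^ 4 * α ^ 2 / (lam + k) ^ 4

theorem hasDerivAt_mseTerm {lam : ℝ} (hlam : lam ≠ 0) (k α d : ℝ) :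
    HasDerivAt (mseTerm lam k α)
      (4 * (k + d) * ((k + d) ^ 2 * (1 + lam * α ^ 2) - (lam + k) ^ 2) /
        (lam * (lam + k) ^ 4)) d := by
  have hsub : HasDerivAt (fun x : ℝ => lam - x) (-1) d := by
    simpa using (hasDerivAt_id d).const_sub lam
  have hadd : HasDerivAt (fun x : ℝ => lam + x + 2 * k) 1 d := by
    simpa using ((hasDerivAt_id d).const_add lam).add_const (2 * k)
  have hshift : HasDerivAt (fun x : ℝ => k + x) 1 d := by
    simpa using (hasDerivAt_id d).const_add k
  refine ((((hsub.fun_pow 2).fun_mul (hadd.fun_pow 2)).div_const _).add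
    (((hshift.fun_pow 4).mul_const (α ^ 2)).div_const _)).congr_deriv ?_
  field_simp
  push_cast
  ring

theorem add_div_sqrt_sq_mul {a : ℝ} (ha : 0 < a) (k c : ℝ) :
    (k + (-k + c / √a)) ^ 2 * a = c ^ 2 := by
  rw [add_neg_cancel_left, div_pow, Real.sq_sqrt ha.le, div_mul_cancel₀ _ ha.ne']

end LiuType

open LiuType in
theorem dopt_critical_point_general (lam k α : ℝ) (hlam : 0 < lam) :
    deriv (fun d : ℝ =>
        (lam - d) ^ 2 * (lam + d + 2 * k) ^ 2 / (lam * (lam + k) ^ 4) +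
          (k + d) ^ 4 * α ^ 2 / (lam + k) ^ 4)
      (-k + (lam + k) / Real.sqrt (1 + lam * α ^ 2)) = 0 := by
  change deriv (mseTerm lam k α) _ = 0
  have hcrit := add_div_sqrt_sq_mul (by positivity : 0 < 1 + lam * α ^ 2) k (lam + k)
  rw [(hasDerivAt_mseTerm hlam.ne' k α _).deriv, hcrit, sub_self, mul_zero, zero_div]

/-- The optimal Liu biasing parameter `d* = −k + (λ + k)/√(1 + λα²)` is a
critical point of the single-eigenvalue contribution to the scalar MSE of the AULTE. -/
theorem dopt_critical_point (lam k α : ℝ) (hlam : 0 < lam) (hk : 0 < k) :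
    deriv (fun d : ℝ =>
        (lam - d) ^ 2 * (lam + d + 2 * k) ^ 2 / (lam * (lam + k) ^ 4) +
          (k + d) ^ 4 * α ^ 2 / (lam + k) ^ 4)
      (-k + (lam + k) / Real.sqrt (1 + lam * α ^ 2)) = 0 :=
  dopt_critical_point_general lam k α hlam
end
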